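/- Let k ≥ 3. If u is a position with u ∉ P_m for every m ∈ ℕ, then u has a follower lying in P_n for some n ∈ ℕ; that is, from any position which is in no P_m there is a legal move to a position in some P_n. -/

import Mathlib

/-- `T n` is the `n`-th triangular number `n(n+1)/2`. -/
def T (n : ℕ) : ℕ := n * (n + 1) / 2

/-- `Pset k n` is the set `Pₙ` of positions `(T n, m₁, …, m_{k-1})` (nondecreasing
`k`-tuples) whose first component is `T n` and whose remaining components sum to
`(k-1)·T n + n` (each of them is automatically `≥ T n` by monotonicity). -/
def Pset (k : ℕ) [NeZero k] (n : ℕ) : Set (Fin k → ℕ) :=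
  {u | Monotone u ∧ u 0 = T n ∧
    ∑ i ∈ Finset.univ.erase 0, u i = (k - 1) * T n + n}

/-- A raw move of the `k`-heap game (before re-sorting): either (i) remove a positive
number of tokens from at least one and at most `k-1` heaps, or (ii) remove the same
positive number `t` of tokens from all `k` heaps (`t` at most the smallest heap). -/
def MoveRaw (k : ℕ) (u w : Fin k → ℕ) : Prop :=
  ((∀ i, w i ≤ u i) ∧ u ≠ w ∧
    (Finset.univ.filter fun i => w i < u i).card ≤ k - 1)
  ∨ (∃ t > 0, ∀ i, u i = w i + t)

/-- `v` is a follower of `u`: `v` is obtained from `u` by one move, with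
the components re-sorted into nondecreasing order. -/
def Follower (k : ℕ) (u v : Fin k → ℕ) : Prop :=
  ∃ w : Fin k → ℕ, MoveRaw k u w ∧ Monotone v ∧ ∃ σ : Equiv.Perm (Fin k), v = w ∘ σ

/-!
Write the total of `u` as `k * u 0 + m`. If `T m < u 0`, removing `u 0 - T m` tokens from every
heap lands in `P_m` (and `T m = u 0` would put `u` itself in `P_m`). Otherwise take `n` with
`T n ≤ u 0 < T (n + 1)`; then `n < m`, so the total is at least `k * T n + n`. A move of type (i)
that leaves one heap `u j ≤ T n + n` untouched, lowers another heap to `T n` and trims the others,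
keeping them `≥ T n`, to the right total then lands in `P_n`. Keep heap `1` if
`u 1 ≤ T n + n`; otherwise keep heap `0` and lower heap `1`: the `k - 2 ≥ 1` heaps above
`u 1 > T n + n` then hold enough tokens.
-/

theorem T_succ (n : ℕ) : T (n + 1) = T n + (n + 1) := by
  have h : 2 ∣ n * (n + 1) := n.even_mul_succ_self.two_dvd
  simp only [T]
  have : (n + 1) * (n + 1 + 1) = n * (n + 1) + 2 * (n + 1) := by ring
  omega

theorem T_strictMono : StrictMono T :=
  strictMono_nat_of_lt_succ fun n => by rw [T_succ]; omega

theorem exists_T_le_lt_T_succ (x : ℕ) : ∃ n, T n ≤ x ∧ x < T (n + 1) := by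
  have hex : ∃ n, x < T (n + 1) := ⟨x, Nat.lt_of_lt_of_le x.lt_succ_self (T_strictMono.id_le _)⟩
  refine ⟨Nat.find hex, ?_, Nat.find_spec hex⟩
  rcases h : Nat.find hex with _ | n
  · simp [T]
  · exact not_lt.mp (Nat.find_min hex (h ▸ n.lt_succ_self))

theorem Finset.exists_le_le_sum_eq {ι : Type*} [DecidableEq ι] (s : Finset ι) {f g : ι → ℕ}
    (hfg : ∀ i ∈ s, f i ≤ g i) {t : ℕ} (hft : ∑ i ∈ s, f i ≤ t) (htg : t ≤ ∑ i ∈ s, g i) :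
    ∃ h : ι → ℕ, (∀ i ∈ s, f i ≤ h i ∧ h i ≤ g i) ∧ ∑ i ∈ s, h i = t := by
  induction s using Finset.induction_on generalizing t with
  | empty => exact ⟨f, by simp, by simp_all⟩
  | insert a s ha ih =>
    rw [Finset.sum_insert ha] at hft htg
    have hfga := hfg a (mem_insert_self a s)
    -- `a` takes as much as it can while leaving at least `∑ i ∈ s, f i` for `s`
    obtain ⟨x, hxg, hxt, hx⟩ : ∃ x, x ≤ g a ∧ x ≤ t - ∑ i ∈ s, f i ∧
        (x = g a ∨ x = t - ∑ i ∈ s, f i) :=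
      ⟨_, min_le_left _ _, min_le_right _ _, min_choice _ _⟩
    have hfgs : ∑ i ∈ s, f i ≤ ∑ i ∈ s, g i := sum_le_sum fun i hi => hfg i (mem_insert_of_mem hi)
    obtain ⟨h, hbd, hsum⟩ := ih (fun i hi => hfg i (mem_insert_of_mem hi)) (t := t - x)
      (by omega) (by omega)
    refine ⟨Function.update h a x, ?_, ?_⟩
    · intro i hi
      rcases eq_or_ne i a with rfl | hia
      · simp only [Function.update_self]; omega
      · simpa only [Function.update_of_ne hia] using hbd i ((mem_insert.mp hi).resolve_left hia)
    · rw [sum_insert ha, Function.update_self, sum_update_of_notMem ha]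
      omega

theorem Finset.sum_update_add_apply {ι M : Type*} [DecidableEq ι] [AddCommMonoid M]
    {s : Finset ι} {j : ι} (hj : j ∈ s) (φ : ι → M) (b : M) :
    ∑ i ∈ s, Function.update φ j b i + φ j = b + ∑ i ∈ s, φ i := by
  rw [sum_update_of_mem hj, sum_eq_add_sum_sdiff_singleton_of_mem hj, add_assoc, add_comm _ (φ j)]

section Game

variable {k : ℕ} [NeZero k]

theorem mem_Pset_of_sum_eq {m : ℕ} {v : Fin k → ℕ} (hv : Monotone v) (h0 : v 0 = T m)
    (hs : ∑ i, v i = k * T m + m) : v ∈ Pset k m := by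
  refine ⟨hv, h0, ?_⟩
  have hsplit := Finset.add_sum_erase Finset.univ v (Finset.mem_univ 0)
  have hk : (k - 1) * T m + T m = k * T m := by
    rw [← Nat.succ_mul, Nat.succ_eq_add_one, Nat.sub_add_cancel NeZero.one_le]
  omega

theorem exists_follower_mem_Pset {u w : Fin k → ℕ} {m : ℕ} (hmove : MoveRaw k u w)
    (hlow : ∀ i, T m ≤ w i) (hmin : ∃ j, w j = T m) (hsum : ∑ i, w i = k * T m + m) :
    ∃ v, Follower k u v ∧ v ∈ Pset k m := by
  obtain ⟨j, hj⟩ := hmin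
  have hmono : Monotone (w ∘ Tuple.sort w) := Tuple.monotone_sort w
  refine ⟨_, ⟨w, hmove, hmono, _, rfl⟩, mem_Pset_of_sum_eq hmono ?_ ?_⟩
  · refine le_antisymm ?_ (hlow _)
    simpa [hj] using hmono (Fin.zero_le ((Tuple.sort w).symm j))
  · exact (Equiv.sum_comp _ w).trans hsum

theorem exists_follower_mem_Pset_of_T_lt {u : Fin k → ℕ} {m : ℕ} (hu : Monotone u)
    (hS : ∑ i, u i = k * u 0 + m) (hlt : T m < u 0) :
    ∃ v, Follower k u v ∧ v ∈ Pset k m := by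
  have ht : ∀ i, u 0 - T m ≤ u i := fun i => (Nat.sub_le _ _).trans (hu (Fin.zero_le i))
  refine exists_follower_mem_Pset (w := fun i => u i - (u 0 - T m))
    (Or.inr ⟨u 0 - T m, by omega, fun i => (Nat.sub_add_cancel (ht i)).symm⟩)
    (fun i => by have := hu (Fin.zero_le i); omega) ⟨0, by omega⟩ ?_
  have hsub := Finset.sum_tsub_distrib Finset.univ (fun i _ => ht i)
  simp only [Finset.sum_const, Finset.card_univ, Fintype.card_fin, smul_eq_mul] at hsub
  have hsplit : k * u 0 = k * (u 0 - T m) + k * T m := by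
    rw [← Nat.mul_add, Nat.sub_add_cancel hlt.le]
  omega

theorem exists_follower_mem_Pset_of_keep_heap {u : Fin k → ℕ} {n : ℕ} (hu : Monotone u)
    (hP : u ∉ Pset k n) {j z : Fin k} (hjz : j ≠ z) (h0 : T n ≤ u 0) (hj : u j ≤ T n + n)
    (hsum : k * T n + n + u z ≤ ∑ i, u i + T n) :
    ∃ v, Follower k u v ∧ v ∈ Pset k n := by
  have hlow : ∀ i, T n ≤ u i := fun i => h0.trans (hu (Fin.zero_le i))
  set f := Function.update (fun _ => T n) j (u j)
  set g := Function.update u z (T n)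
  have hf : ∑ i, f i + T n = u j + k * T n := by
    simpa using Finset.sum_update_add_apply (Finset.mem_univ j) (fun _ => T n) (u j)
  have hg : ∑ i, g i + u z = T n + ∑ i, u i := Finset.sum_update_add_apply (Finset.mem_univ z) u _
  have hfg : ∀ i ∈ Finset.univ, f i ≤ g i := by
    intro i _
    simp only [f, g, Function.update_apply]
    split_ifs <;> grind
  obtain ⟨w, hw, hwsum⟩ := Finset.univ.exists_le_le_sum_eq hfg (t := k * T n + n)
    (by omega) (by omega)
  have hwj : w j = u j := by
    have := hw j (Finset.mem_univ j)
    simp only [f, g, Function.update_self, Function.update_of_ne hjz] at this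
    omega
  have hwz : w z = T n := by
    have := hw z (Finset.mem_univ z)
    simp only [f, g, Function.update_self, Function.update_of_ne hjz.symm] at this
    omega
  have hwlow : ∀ i, T n ≤ w i := fun i => by
    have := (hw i (Finset.mem_univ i)).1
    simp only [f, Function.update_apply] at this
    split_ifs at this <;> grind
  have hwu : ∀ i, w i ≤ u i := fun i => (hw i (Finset.mem_univ i)).2.trans <| by
    simp only [g, Function.update_apply]; split_ifs <;> grind
  refine exists_follower_mem_Pset (Or.inl ⟨hwu, ?_, ?_⟩) hwlow ⟨z, hwz⟩ hwsum
  · rintro rfl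
    exact hP (mem_Pset_of_sum_eq hu (le_antisymm (hwz ▸ hu (Fin.zero_le z)) h0) hwsum)
  · calc (Finset.univ.filter fun i => w i < u i).card ≤ (Finset.univ.erase j).card :=
          Finset.card_le_card fun i hi => Finset.mem_erase.mpr
            ⟨by rintro rfl; simp [hwj] at hi, Finset.mem_univ i⟩
      _ = k - 1 := by simp [Finset.card_erase_of_mem]

theorem add_mul_le_sum_of_monotone {u : Fin k → ℕ} (hu : Monotone u) (h1 : 1 < k) :
    u 0 + (k - 1) * u ⟨1, h1⟩ ≤ ∑ i, u i := by
  rw [← Finset.add_sum_erase _ _ (Finset.mem_univ 0)]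
  have := Finset.card_nsmul_le_sum (Finset.univ.erase 0) u (u ⟨1, h1⟩) fun i hi =>
    hu (Fin.le_def.mpr (Nat.one_le_iff_ne_zero.mpr
      (Fin.val_ne_zero_iff.mpr (Finset.ne_of_mem_erase hi))))
  simpa [Finset.card_erase_of_mem] using this

end Game

/-- part (II) of the proof of Theorem 1: from any position lying in
no `Pₘ` there is a legal move to a position in some `Pₙ`. -/
theorem non_P_has_P_follower (k : ℕ) [NeZero k] (hk : 3 ≤ k)
    (u : Fin k → ℕ) (hu : Monotone u) (h : ∀ m, u ∉ Pset k m) :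
    ∃ v, Follower k u v ∧ ∃ n, v ∈ Pset k n := by
  obtain ⟨m, hS⟩ : ∃ m, ∑ i, u i = k * u 0 + m := by
    have := Finset.card_nsmul_le_sum Finset.univ u (u 0) fun i _ => hu (Fin.zero_le i)
    simp only [Finset.card_univ, Fintype.card_fin, smul_eq_mul] at this
    exact ⟨_, (Nat.add_sub_cancel' this).symm⟩
  rcases lt_trichotomy (T m) (u 0) with hlt | heq | hgt
  · obtain ⟨v, hv, hvP⟩ := exists_follower_mem_Pset_of_T_lt hu hS hlt
    exact ⟨v, hv, m, hvP⟩
  · exact absurd (mem_Pset_of_sum_eq hu heq.symm (heq ▸ hS)) (h m)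
  obtain ⟨n, hTn, hlt⟩ := exists_T_le_lt_T_succ (u 0)
  rw [T_succ] at hlt
  have hnm : n ≤ m := (T_strictMono.lt_iff_lt.mp (hTn.trans_lt hgt)).le
  have h1 : 1 < k := by omega
  have hsum := add_mul_le_sum_of_monotone hu h1
  suffices ∃ v, Follower k u v ∧ v ∈ Pset k n from this.imp fun v hv => ⟨hv.1, n, hv.2⟩
  by_cases hu1 : u ⟨1, h1⟩ ≤ T n + n
  · refine exists_follower_mem_Pset_of_keep_heap hu (h n) (z := 0) (by simp [Fin.ext_iff])
      hTn hu1 ?_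
    nlinarith
  · refine exists_follower_mem_Pset_of_keep_heap hu (h n) (j := 0) (z := ⟨1, h1⟩)
      (by simp [Fin.ext_iff]) hTn (by omega) ?_
    have hu1 : T n + n + 1 ≤ u ⟨1, h1⟩ := not_le.mp hu1
    zify [h1.le] at hsum hu1 hTn hk ⊢
    nlinarith [mul_le_mul_of_nonneg_left hu1 (by linarith : (0 : ℤ) ≤ k - 2),
      mul_nonneg (by linarith : (0 : ℤ) ≤ k - 3) (by positivity : (0 : ℤ) ≤ n + 1)]
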